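/- arXiv:math-ph/0608009 — 4 statements merged into one kernel-verified Lean document; each statement's English description precedes it below -/
import Mathlib

section
/- Let d ≥ 2 and d < s ≤ d+1. There exists a constant C_2 = C_2(d,s) < ∞ such that for all 1 ≤ a ≤ L, the integral I_2(L,a) = ∫_a^L dx ∫_a^L dy ∫_0^∞ dx̃ ∫_0^∞ dỹ ∫_{R^{d−2}} dz [(x+x̃)^2 + (y+ỹ)^2 + |z|^2]^{−s/2} satisfies I_2(L,a) ≤ C_2 L^{d+2−s}. -/
open scoped BigOperators
open MeasureTheory Set

namespace I2Aux

lemma meas_of_pos {α : Type*} [TopologicalSpace α] [MeasurableSpace α] [OpensMeasurableSpace α]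
    {f : α → ℝ} (hf : Continuous f) (hpos : ∀ x, 0 < f x) (e : ℝ) :
    Measurable fun x => ENNReal.ofReal (f x ^ e) := by
  have : Continuous fun x => f x ^ e := continuous_iff_continuousAt.2 fun x =>
    (Real.continuousAt_rpow_const _ _ (Or.inl (hpos x).ne')).comp hf.continuousAt
  exact this.measurable.ennreal_ofReal

lemma one_dim {p : ℝ} (hp : 1 < p) {m : ℝ} (hm : 0 < m) :
    ∫⁻ t : ℝ, ENNReal.ofReal ((m + t ^ 2) ^ (-p / 2)) ≤
      ENNReal.ofReal ((2 + 2 / (p - 1)) * m ^ ((1 - p) / 2)) := by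
  set b : ℝ := m ^ ((1:ℝ)/2) with hbdef
  have hb : 0 < b := Real.rpow_pos_of_pos hm _
  have hb2 : b ^ 2 = m := by
    rw [hbdef, ← Real.rpow_natCast (m ^ ((1:ℝ)/2)) 2, ← Real.rpow_mul hm.le]
    norm_num
  have hbm : b ^ (1 - p) = m ^ ((1 - p) / 2) := by
    rw [hbdef, ← Real.rpow_mul hm.le]
    ring_nf
  have hIoi : ∫⁻ t in Ioi b, ENNReal.ofReal ((m + t ^ 2) ^ (-p / 2)) ≤
      ENNReal.ofReal (b ^ (1 - p) / (p - 1)) := by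
    calc ∫⁻ t in Ioi b, ENNReal.ofReal ((m + t ^ 2) ^ (-p / 2))
        ≤ ∫⁻ t in Ioi b, ENNReal.ofReal (t ^ (-p)) := by
          refine setLIntegral_mono' measurableSet_Ioi fun t ht => ?_
          have htb : b < t := ht
          have ht0 : 0 < t := hb.trans htb
          have hrw : t ^ (-p) = (t ^ 2 : ℝ) ^ (-p / 2) := by
            rw [← Real.rpow_natCast t 2, ← Real.rpow_mul ht0.le]
            congr 1
            push_cast
            ring
          refine ENNReal.ofReal_le_ofReal ?_
          rw [hrw]
          exact Real.rpow_le_rpow_of_nonpos (by positivity) (by nlinarith) (by linarith)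
      _ = ENNReal.ofReal (∫ t in Ioi b, t ^ (-p)) := by
          rw [← ofReal_integral_eq_lintegral_ofReal (integrableOn_Ioi_rpow_of_lt (by linarith) hb)]
          filter_upwards [ae_restrict_mem measurableSet_Ioi] with t ht
          exact Real.rpow_nonneg (hb.trans ht).le _
      _ = ENNReal.ofReal (-b ^ (-p + 1) / (-p + 1)) := by
          rw [integral_Ioi_rpow_of_lt (by linarith) hb]
      _ = ENNReal.ofReal (b ^ (1 - p) / (p - 1)) := by
          congr 1
          rw [show (-p + 1 : ℝ) = -(p - 1) by ring, div_neg, neg_div, neg_neg,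
            show (-(p - 1) : ℝ) = 1 - p by ring]
  have hIio : ∫⁻ t in Iio (-b), ENNReal.ofReal ((m + t ^ 2) ^ (-p / 2)) =
      ∫⁻ t in Ioi b, ENNReal.ofReal ((m + t ^ 2) ^ (-p / 2)) := by
    have hmp := (Measure.measurePreserving_neg (volume : Measure ℝ)).setLIntegral_comp_preimage_emb
      measurableEmbedding_neg (fun t => ENNReal.ofReal ((m + t ^ 2) ^ (-p / 2))) (Iio (-b))
    have hpre : (Neg.neg : ℝ → ℝ) ⁻¹' (Iio (-b)) = Ioi b := by
      ext t
      simp only [mem_preimage, mem_Iio, mem_Ioi]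
      constructor <;> intro h <;> linarith
    rw [hpre] at hmp
    rw [← hmp]
    refine setLIntegral_congr_fun measurableSet_Ioi (fun t ht => ?_)
    rw [neg_sq]
  have hIcc : ∫⁻ t in Icc (-b) b, ENNReal.ofReal ((m + t ^ 2) ^ (-p / 2)) ≤
      ENNReal.ofReal (2 * m ^ ((1 - p) / 2)) := by
    calc ∫⁻ t in Icc (-b) b, ENNReal.ofReal ((m + t ^ 2) ^ (-p / 2))
        ≤ ∫⁻ _ in Icc (-b) b, ENNReal.ofReal (m ^ (-p / 2)) := by
          refine setLIntegral_mono' measurableSet_Icc fun t _ => ?_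
          refine ENNReal.ofReal_le_ofReal ?_
          exact Real.rpow_le_rpow_of_nonpos hm (by nlinarith [sq_nonneg t]) (by linarith)
      _ = ENNReal.ofReal (m ^ (-p / 2)) * volume (Icc (-b) b) := setLIntegral_const _ _
      _ = ENNReal.ofReal (2 * m ^ ((1 - p) / 2)) := by
          rw [Real.volume_Icc, ← ENNReal.ofReal_mul (Real.rpow_nonneg hm.le _)]
          congr 1
          have : b - -b = 2 * b := by ring
          rw [this, hbdef,
            show m ^ (-p / 2) * (2 * m ^ ((1:ℝ) / 2)) = 2 * (m ^ (-p / 2) * m ^ ((1:ℝ) / 2)) by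
              ring,
            ← Real.rpow_add hm]
          congr 1
          ring
  have hsplit := lintegral_add_compl (μ := (volume : Measure ℝ))
    (fun t : ℝ => ENNReal.ofReal ((m + t ^ 2) ^ (-p / 2)))
    (measurableSet_Icc (a := -b) (b := b))
  have hcompl : (Icc (-b) b)ᶜ = Iio (-b) ∪ Ioi b := by
    ext t
    simp only [mem_compl_iff, mem_Icc, not_and_or, not_le, mem_union, mem_Iio, mem_Ioi]
  calc ∫⁻ t : ℝ, ENNReal.ofReal ((m + t ^ 2) ^ (-p / 2))
      = (∫⁻ t in Icc (-b) b, ENNReal.ofReal ((m + t ^ 2) ^ (-p / 2))) +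
        ∫⁻ t in (Icc (-b) b)ᶜ, ENNReal.ofReal ((m + t ^ 2) ^ (-p / 2)) := hsplit.symm
    _ ≤ ENNReal.ofReal (2 * m ^ ((1 - p) / 2)) +
        ENNReal.ofReal (2 * (b ^ (1 - p) / (p - 1))) := by
        refine add_le_add hIcc ?_
        rw [hcompl, lintegral_union measurableSet_Ioi (by
          refine Set.disjoint_left.2 fun t h1 h2 => ?_
          simp only [mem_Iio] at h1
          simp only [mem_Ioi] at h2
          linarith), hIio]
        refine le_trans (add_le_add hIoi hIoi) ?_
        rw [← ENNReal.ofReal_add (div_nonneg (Real.rpow_nonneg hb.le _) (by linarith))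
          (div_nonneg (Real.rpow_nonneg hb.le _) (by linarith))]
        exact ENNReal.ofReal_le_ofReal (le_of_eq (by ring))
    _ = ENNReal.ofReal ((2 + 2 / (p - 1)) * m ^ ((1 - p) / 2)) := by
        rw [← ENNReal.ofReal_add (mul_nonneg two_pos.le (Real.rpow_nonneg hm.le _))
          (mul_nonneg two_pos.le (div_nonneg (Real.rpow_nonneg hb.le _) (by linarith))), hbm]
        congr 1
        field_simp



lemma multi (n : ℕ) {r : ℝ} (hr : (n : ℝ) < r) :
    ∃ K : ℝ, 0 ≤ K ∧ ∀ m : ℝ, 0 < m →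
      ∫⁻ z : Fin n → ℝ, ENNReal.ofReal ((m + ∑ k, (z k) ^ 2) ^ (-r / 2)) ≤
        ENNReal.ofReal (K * m ^ (((n : ℝ) - r) / 2)) := by
  induction n with
  | zero =>
    refine ⟨1, zero_le_one, fun m hm => ?_⟩
    rw [lintegral_unique]
    simp only [Finset.univ_eq_empty, Finset.sum_empty, add_zero]
    have huniv : (volume : Measure (Fin 0 → ℝ)) Set.univ = 1 := by
      simp [volume_pi, Measure.pi_univ]
    rw [huniv, mul_one, one_mul]
    refine ENNReal.ofReal_le_ofReal (le_of_eq ?_)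
    congr 1
    ring
  | succ n ih =>
    obtain ⟨K, hK0, hK⟩ := ih (by push_cast at hr ⊢; linarith)
    have hp1 : 1 < r - n := by push_cast at hr; linarith
    refine ⟨K * (2 + 2 / (r - n - 1)), mul_nonneg hK0 (add_nonneg (by norm_num)
      (div_nonneg (by norm_num) (by linarith))), fun m hm => ?_⟩
    have hmp := ((measurePreserving_piFinSuccAbove (fun _ : Fin (n+1) => (volume : Measure ℝ)) 0).symm)
    rw [volume_pi, ← hmp.lintegral_comp_emb (MeasurableEquiv.measurableEmbedding _)]
    have hsum : ∀ a : ℝ × (Fin n → ℝ),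
        ENNReal.ofReal ((m + ∑ k, ((MeasurableEquiv.piFinSuccAbove (fun _ => ℝ) 0).symm a k) ^ 2)
            ^ (-r / 2))
          = ENNReal.ofReal (((m + a.1 ^ 2) + ∑ k, (a.2 k) ^ 2) ^ (-r / 2)) := by
      intro a
      congr 2
      rw [Fin.sum_univ_succ]
      simp only [MeasurableEquiv.piFinSuccAbove_symm_apply, Fin.insertNthEquiv,
        Fin.insertNth_zero, Fin.zero_succAbove, cast_eq, Equiv.coe_fn_mk, Fin.cons_zero, Fin.cons_succ]
      ring
    simp only [Function.comp_def, hsum]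
    have hmeas : Measurable fun a : ℝ × (Fin n → ℝ) =>
        ENNReal.ofReal (((m + a.1 ^ 2) + ∑ k, (a.2 k) ^ 2) ^ (-r / 2)) := by
      refine meas_of_pos ?_ ?_ _
      · exact (continuous_const.add ((continuous_fst.pow 2))).add
          (continuous_finset_sum _ fun k _ => ((continuous_apply k).comp continuous_snd).pow 2)
      · intro a
        have h1 : (0:ℝ) ≤ ∑ k, (a.2 k) ^ 2 := Finset.sum_nonneg fun k _ => sq_nonneg _
        nlinarith [sq_nonneg a.1]
    rw [lintegral_prod _ hmeas.aemeasurable]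
    calc ∫⁻ t : ℝ, ∫⁻ w : Fin n → ℝ,
          ENNReal.ofReal (((m + t ^ 2) + ∑ k, (w k) ^ 2) ^ (-r / 2))
            ∂(Measure.pi fun _ => volume) ∂volume
        ≤ ∫⁻ t : ℝ, ENNReal.ofReal (K * (m + t ^ 2) ^ (((n : ℝ) - r) / 2)) := by
          refine lintegral_mono fun t => ?_
          have := hK (m + t ^ 2) (by positivity)
          rwa [volume_pi] at this
      _ = ENNReal.ofReal K * ∫⁻ t : ℝ, ENNReal.ofReal ((m + t ^ 2) ^ (-(r - n) / 2)) := by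
          simp_rw [show (((n : ℝ) - r) / 2) = -(r - (n:ℝ)) / 2 by ring,
            ENNReal.ofReal_mul hK0]
          exact lintegral_const_mul' _ _ ENNReal.ofReal_ne_top
      _ ≤ ENNReal.ofReal K * ENNReal.ofReal ((2 + 2 / ((r - n) - 1)) * m ^ ((1 - (r - n)) / 2)) :=
          mul_le_mul_right (one_dim hp1 hm) _
      _ = ENNReal.ofReal (K * (2 + 2 / (r - n - 1)) * m ^ ((((n:ℕ)+1 : ℝ) - r) / 2)) := by
          rw [← ENNReal.ofReal_mul hK0, ← mul_assoc]
          congr 2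
          ring
      _ = ENNReal.ofReal (K * (2 + 2 / (r - n - 1)) * m ^ ((((n+1 : ℕ) : ℝ) - r) / 2)) := by
          norm_num


lemma shift {γ : ℝ} (hγ : γ < -1) {c w : ℝ} (hc : 0 ≤ c) (hw : 0 < w) :
    ∫⁻ u in Ioi (0:ℝ), ENNReal.ofReal (c * (w + u) ^ γ) =
      ENNReal.ofReal (c * ((-(γ + 1))⁻¹ * w ^ (γ + 1))) := by
  have key : ∫⁻ u in Ioi (0:ℝ), ENNReal.ofReal ((w + u) ^ γ) =
      ENNReal.ofReal ((-(γ + 1))⁻¹ * w ^ (γ + 1)) := by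
    have hmp := (measurePreserving_add_right (volume : Measure ℝ) w).setLIntegral_comp_preimage_emb
      (measurableEmbedding_addRight w) (fun t => ENNReal.ofReal (t ^ γ)) (Ioi w)
    have hpre : (fun u : ℝ => u + w) ⁻¹' (Ioi w) = Ioi 0 := by
      ext u
      simp only [mem_preimage, mem_Ioi]
      constructor <;> intro h <;> linarith
    rw [hpre] at hmp
    have hcongr : ∀ u : ℝ, ENNReal.ofReal ((w + u) ^ γ) = ENNReal.ofReal ((u + w) ^ γ) :=
      fun u => by rw [add_comm]
    simp_rw [hcongr]
    rw [hmp, ← ofReal_integral_eq_lintegral_ofReal (integrableOn_Ioi_rpow_of_lt hγ hw) ?_,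
      integral_Ioi_rpow_of_lt hγ hw]
    · congr 1
      rw [neg_div, div_eq_inv_mul, ← neg_mul, neg_inv]
    · filter_upwards [ae_restrict_mem measurableSet_Ioi] with t ht
      exact Real.rpow_nonneg (hw.trans ht).le _
  simp_rw [ENNReal.ofReal_mul hc]
  rw [lintegral_const_mul' _ _ ENNReal.ofReal_ne_top, key]

lemma outer {β : ℝ} (hβ : -1 < β) {c a L : ℝ} (hc : 0 ≤ c) (ha : 0 ≤ a) (hL : 0 < L) :
    ∫⁻ x in Ioc a L, ENNReal.ofReal (c * x ^ β) ≤
      ENNReal.ofReal (c * ((β + 1)⁻¹ * L ^ (β + 1))) := by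
  have hβ1 : 0 < β + 1 := by linarith
  have hval : ∫ x in Ioc (0:ℝ) L, x ^ β = (β + 1)⁻¹ * L ^ (β + 1) := by
    rw [← intervalIntegral.integral_of_le hL.le, integral_rpow (Or.inl hβ),
      Real.zero_rpow (ne_of_gt hβ1)]
    field_simp
    ring
  calc ∫⁻ x in Ioc a L, ENNReal.ofReal (c * x ^ β)
      ≤ ∫⁻ x in Ioc (0:ℝ) L, ENNReal.ofReal (c * x ^ β) :=
        lintegral_mono_set (Ioc_subset_Ioc_left ha)
    _ = ENNReal.ofReal c * ∫⁻ x in Ioc (0:ℝ) L, ENNReal.ofReal (x ^ β) := by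
        simp_rw [ENNReal.ofReal_mul hc]
        exact lintegral_const_mul' _ _ ENNReal.ofReal_ne_top
    _ = ENNReal.ofReal c * ENNReal.ofReal ((β + 1)⁻¹ * L ^ (β + 1)) := by
        rw [← ofReal_integral_eq_lintegral_ofReal ((intervalIntegral.intervalIntegrable_rpow' hβ (a := 0) (b := L)).1) ?_, hval]
        filter_upwards [ae_restrict_mem measurableSet_Ioc] with t ht
        exact Real.rpow_nonneg ht.1.le _
    _ = ENNReal.ofReal (c * ((β + 1)⁻¹ * L ^ (β + 1))) := (ENNReal.ofReal_mul hc).symm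

end I2Aux

/-- For `d ≥ 2` and `d < s ≤ d+1`, there is a constant `C_2 = C_2(d,s) < ∞` such that
for all `1 ≤ a ≤ L`, the quarter-space interaction integral
`I_2(L,a) = ∫_a^L dx ∫_a^L dy ∫_0^∞ dx̃ ∫_0^∞ dỹ ∫_{ℝ^{d-2}} dz
[(x+x̃)^2 + (y+ỹ)^2 + |z|^2]^{-s/2}` satisfies `I_2(L,a) ≤ C_2 L^{d+2-s}`. -/
theorem I2_upper_bound (d : ℕ) (hd : 2 ≤ d) (s : ℝ) (hs1 : (d : ℝ) < s)
    (hs2 : s ≤ (d : ℝ) + 1) :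
    ∃ C : ℝ, ∀ a L : ℝ, 1 ≤ a → a ≤ L →
      (∫⁻ x in Set.Ioc a L, ∫⁻ y in Set.Ioc a L,
        ∫⁻ u in Set.Ioi (0 : ℝ), ∫⁻ v in Set.Ioi (0 : ℝ),
          ∫⁻ z : Fin (d - 2) → ℝ,
            ENNReal.ofReal (((x + u) ^ 2 + (y + v) ^ 2 + ∑ k, (z k) ^ 2) ^ (-s / 2)))
        ≤ ENNReal.ofReal (C * L ^ ((d : ℝ) + 2 - s)) := by
  have hd2 : ((d - 2 : ℕ) : ℝ) = (d : ℝ) - 2 := by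
    rw [Nat.cast_sub hd]
    norm_num
  have hns : ((d - 2 : ℕ) : ℝ) < s := by rw [hd2]; linarith
  obtain ⟨K, hK0, hK⟩ := I2Aux.multi (d - 2) hns
  set γ : ℝ := (((d - 2 : ℕ) : ℝ) - s) / 2 with hγdef
  have hγ : γ < -1 := by rw [hγdef, hd2]; linarith
  set β : ℝ := γ + 1 with hβdef
  have hβ : -1 < β := by rw [hβdef, hγdef, hd2]; linarith
  set c₁ : ℝ := (-(γ + 1))⁻¹ with hc₁def
  have hc₁0 : 0 ≤ c₁ := by
    rw [hc₁def]
    exact inv_nonneg.2 (by linarith)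
  set c₂ : ℝ := (β + 1)⁻¹ with hc₂def
  have hc₂0 : 0 ≤ c₂ := by
    rw [hc₂def]
    exact inv_nonneg.2 (by linarith)
  refine ⟨K * c₁ ^ 2 * c₂ ^ 2, fun a L ha haL => ?_⟩
  have ha0 : 0 < a := lt_of_lt_of_le zero_lt_one ha
  have hL0 : 0 < L := ha0.trans_le haL
  have inner : ∀ x ∈ Set.Ioc a L, ∀ y ∈ Set.Ioc a L,
      (∫⁻ u in Set.Ioi (0 : ℝ), ∫⁻ v in Set.Ioi (0 : ℝ),
        ∫⁻ z : Fin (d - 2) → ℝ,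
          ENNReal.ofReal (((x + u) ^ 2 + (y + v) ^ 2 + ∑ k, (z k) ^ 2) ^ (-s / 2)))
        ≤ ENNReal.ofReal ((K * c₁ * c₁) * (x ^ β * y ^ β)) := by
    intro x hx y hy
    have hx0 : 0 < x := ha0.trans hx.1
    have hy0 : 0 < y := ha0.trans hy.1
    calc (∫⁻ u in Set.Ioi (0 : ℝ), ∫⁻ v in Set.Ioi (0 : ℝ),
          ∫⁻ z : Fin (d - 2) → ℝ,
            ENNReal.ofReal (((x + u) ^ 2 + (y + v) ^ 2 + ∑ k, (z k) ^ 2) ^ (-s / 2)))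
        ≤ ∫⁻ u in Set.Ioi (0 : ℝ), ∫⁻ v in Set.Ioi (0 : ℝ),
            ENNReal.ofReal ((K * (x + u) ^ γ) * (y + v) ^ γ) := by
          refine setLIntegral_mono' measurableSet_Ioi fun u hu => ?_
          refine setLIntegral_mono' measurableSet_Ioi fun v hv => ?_
          have hu0 : 0 < u := hu
          have hv0 : 0 < v := hv
          have hA : 0 < x + u := by linarith
          have hB : 0 < y + v := by linarith
          have hm : 0 < (x + u) ^ 2 + (y + v) ^ 2 := by positivity
          refine le_trans (hK _ hm) (ENNReal.ofReal_le_ofReal ?_)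
          rw [mul_assoc, ← Real.mul_rpow hA.le hB.le]
          refine mul_le_mul_of_nonneg_left ?_ hK0
          exact Real.rpow_le_rpow_of_nonpos (by positivity) (by nlinarith) (by linarith)
      _ = ∫⁻ u in Set.Ioi (0 : ℝ),
            ENNReal.ofReal ((K * c₁ * y ^ β) * (x + u) ^ γ) := by
          refine setLIntegral_congr_fun measurableSet_Ioi (
            fun u hu => ?_)
          have hu0 : 0 < u := hu
          have hA : 0 < x + u := by linarith
          have hcu : 0 ≤ K * (x + u) ^ γ := mul_nonneg hK0 (Real.rpow_nonneg hA.le _)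
          rw [I2Aux.shift hγ hcu hy0]
          congr 1
          rw [← hc₁def, ← hβdef]
          ring
      _ = ENNReal.ofReal ((K * c₁ * y ^ β) * (c₁ * x ^ β)) := by
          have hcy : 0 ≤ K * c₁ * y ^ β :=
            mul_nonneg (mul_nonneg hK0 hc₁0) (Real.rpow_nonneg hy0.le _)
          rw [I2Aux.shift hγ hcy hx0, ← hc₁def, ← hβdef]
      _ = ENNReal.ofReal ((K * c₁ * c₁) * (x ^ β * y ^ β)) := by
          congr 1
          ring
  calc (∫⁻ x in Set.Ioc a L, ∫⁻ y in Set.Ioc a L,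
        ∫⁻ u in Set.Ioi (0 : ℝ), ∫⁻ v in Set.Ioi (0 : ℝ),
          ∫⁻ z : Fin (d - 2) → ℝ,
            ENNReal.ofReal (((x + u) ^ 2 + (y + v) ^ 2 + ∑ k, (z k) ^ 2) ^ (-s / 2)))
      ≤ ∫⁻ x in Set.Ioc a L, ∫⁻ y in Set.Ioc a L,
          ENNReal.ofReal ((K * c₁ * c₁ * x ^ β) * y ^ β) := by
        refine setLIntegral_mono' measurableSet_Ioc fun x hx => ?_
        refine le_trans (setLIntegral_mono' measurableSet_Ioc fun y hy =>
          inner x hx y hy) ?_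
        refine le_of_eq (setLIntegral_congr_fun measurableSet_Ioc
          (fun y hy => ?_))
        congr 1
        ring
    _ ≤ ∫⁻ x in Set.Ioc a L,
          ENNReal.ofReal ((K * c₁ * c₁ * c₂ * L ^ (β + 1)) * x ^ β) := by
        refine setLIntegral_mono' measurableSet_Ioc fun x hx => ?_
        have hx0 : 0 < x := ha0.trans hx.1
        have hcx : 0 ≤ K * c₁ * c₁ * x ^ β :=
          mul_nonneg (mul_nonneg (mul_nonneg hK0 hc₁0) hc₁0) (Real.rpow_nonneg hx0.le _)
        refine le_trans (I2Aux.outer hβ hcx ha0.le hL0) (le_of_eq ?_)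
        rw [← hc₂def]
        congr 1
        ring
    _ ≤ ENNReal.ofReal ((K * c₁ * c₁ * c₂ * L ^ (β + 1)) * (c₂ * L ^ (β + 1))) := by
        have hcL : 0 ≤ K * c₁ * c₁ * c₂ * L ^ (β + 1) :=
          mul_nonneg (mul_nonneg (mul_nonneg (mul_nonneg hK0 hc₁0) hc₁0) hc₂0)
            (Real.rpow_nonneg hL0.le _)
        refine le_trans (I2Aux.outer hβ hcL ha0.le hL0) (le_of_eq ?_)
        rw [← hc₂def]
    _ = ENNReal.ofReal (K * c₁ ^ 2 * c₂ ^ 2 * L ^ ((d : ℝ) + 2 - s)) := by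
        congr 1
        have hE : L ^ (β + 1) * L ^ (β + 1) = L ^ ((d : ℝ) + 2 - s) := by
          rw [← Real.rpow_add hL0]
          congr 1
          rw [hβdef, hγdef, hd2]
          ring
        rw [← hE]
        ring
end

section
/- Let d ≥ 2, d < s ≤ d+1, and 1 ≤ a ≤ L. Then ∫_a^L ∫_a^L ∫_0^∞ ∫_0^∞ [x^2 + x̃^2 + y^2 + ỹ^2]^{(d−2−s)/2} dx̃ dỹ dx dy ≤ C ∫_{a/2}^{2L} r^{d+1−s} dr for a constant C = C(d,s) < ∞. -/
open scoped BigOperators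
open MeasureTheory

/-- Key one-variable estimate: for `t < -1/2` and `A > 0`,
`∫_0^∞ (A + v²)^t dv ≤ (1 + 1/(-2t-1)) A^{t+1/2}`. -/
lemma key_polar_aux (t A : ℝ) (ht : t < -(1/2)) (hA : 0 < A) :
    ∫⁻ v in Set.Ioi (0:ℝ), ENNReal.ofReal ((A + v ^ 2) ^ t)
      ≤ ENNReal.ofReal ((1 + 1/(-2*t-1)) * A ^ (t + 1/2)) := by
  have ht0 : t ≤ 0 := by linarith
  have h2t : 2*t < -1 := by linarith
  have hden : 0 < -2*t-1 := by linarith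
  set c := Real.sqrt A with hc
  have hc0 : 0 < c := Real.sqrt_pos.mpr hA
  have hApow : (0:ℝ) ≤ A ^ (t + 1/2) := Real.rpow_nonneg hA.le _
  have hcA : c ^ (2*t+1) = A ^ (t + 1/2) := by
    rw [hc, Real.sqrt_eq_rpow, ← Real.rpow_mul hA.le]
    congr 1; ring
  have hsplit : Set.Ioi (0:ℝ) = Set.Ioc 0 c ∪ Set.Ioi c :=
    (Set.Ioc_union_Ioi_eq_Ioi hc0.le).symm
  rw [hsplit, lintegral_union measurableSet_Ioi (Set.Ioc_disjoint_Ioi le_rfl)]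
  have h1 : ∫⁻ v in Set.Ioc (0:ℝ) c, ENNReal.ofReal ((A + v^2)^t)
      ≤ ENNReal.ofReal (A ^ (t+1/2)) := by
    calc ∫⁻ v in Set.Ioc (0:ℝ) c, ENNReal.ofReal ((A + v^2)^t)
        ≤ ∫⁻ _ in Set.Ioc (0:ℝ) c, ENNReal.ofReal (A^t) :=
          setLIntegral_mono measurable_const fun v _ => ENNReal.ofReal_le_ofReal
            (Real.rpow_le_rpow_of_nonpos hA (by nlinarith [sq_nonneg v]) ht0)
      _ = ENNReal.ofReal (A^t) * ENNReal.ofReal c := by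
          rw [setLIntegral_const, Real.volume_Ioc]; norm_num
      _ = ENNReal.ofReal (A^t * c) :=
          (ENNReal.ofReal_mul (Real.rpow_nonneg hA.le t)).symm
      _ = ENNReal.ofReal (A^(t+1/2)) := by
          rw [hc, Real.sqrt_eq_rpow, ← Real.rpow_add hA]
  have h2 : ∫⁻ v in Set.Ioi c, ENNReal.ofReal ((A + v^2)^t)
      ≤ ENNReal.ofReal (A^(t+1/2) / (-2*t-1)) := by
    have hmeas : Measurable fun v : ℝ => ENNReal.ofReal (v ^ (2*t)) := by fun_prop
    calc ∫⁻ v in Set.Ioi c, ENNReal.ofReal ((A + v^2)^t)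
        ≤ ∫⁻ v in Set.Ioi c, ENNReal.ofReal (v ^ (2*t)) := by
          refine setLIntegral_mono hmeas fun v hv => ?_
          have hv0 : 0 < v := hc0.trans hv
          refine ENNReal.ofReal_le_ofReal ?_
          have hvv : v^(2*t) = (v^2)^t := by
            rw [← Real.rpow_natCast v 2, ← Real.rpow_mul hv0.le]
            norm_num
          rw [hvv]
          exact Real.rpow_le_rpow_of_nonpos (by positivity) (by nlinarith [sq_nonneg v]) ht0
      _ = ENNReal.ofReal (∫ v in Set.Ioi c, v^(2*t)) := by
          rw [ofReal_integral_eq_lintegral_ofReal (integrableOn_Ioi_rpow_of_lt h2t hc0) ?_]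
          filter_upwards [ae_restrict_mem measurableSet_Ioi] with v hv using
            Real.rpow_nonneg (hc0.trans hv).le _
      _ = ENNReal.ofReal (A^(t+1/2) / (-2*t-1)) := by
          rw [integral_Ioi_rpow_of_lt h2t hc0]
          congr 1
          rw [← hcA, show (2*t+1 : ℝ) = -(-2*t-1) by ring, div_neg, neg_div, neg_neg]
  refine le_trans (add_le_add h1 h2) ?_
  rw [← ENNReal.ofReal_add hApow (by positivity)]
  exact ENNReal.ofReal_le_ofReal (le_of_eq (by field_simp))

set_option maxHeartbeats 2000000 in
/-- For `d ≥ 2`, `d < s ≤ d+1` and `1 ≤ a ≤ L`,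
`∫_a^L ∫_a^L ∫_0^∞ ∫_0^∞ [x² + x̃² + y² + ỹ²]^{(d−2−s)/2} dx̃ dỹ dx dy
 ≤ C ∫_{a/2}^{2L} r^{d+1−s} dr` for a constant `C = C(d,s) < ∞`. -/
theorem polar_coordinates_bound (d : ℕ) (hd : 2 ≤ d) (s : ℝ) (hs1 : (d : ℝ) < s)
    (hs2 : s ≤ (d : ℝ) + 1) :
    ∃ C : ℝ, ∀ a L : ℝ, 1 ≤ a → a ≤ L →
      (∫⁻ x in Set.Ioc a L, ∫⁻ y in Set.Ioc a L,
        ∫⁻ u in Set.Ioi (0 : ℝ), ∫⁻ v in Set.Ioi (0 : ℝ),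
          ENNReal.ofReal ((x ^ 2 + u ^ 2 + y ^ 2 + v ^ 2) ^ (((d : ℝ) - 2 - s) / 2)))
      ≤ ENNReal.ofReal (C * ∫ r in Set.Ioc (a / 2) (2 * L), r ^ ((d : ℝ) + 1 - s)) := by
  set α : ℝ := ((d : ℝ) - 2 - s) / 2 with hαdef
  set β : ℝ := α + 1/2 with hβdef
  set γ : ℝ := β + 1/2 with hγdef
  have hα : α < -(1/2) := by rw [hαdef]; linarith
  have hβ : β < -(1/2) := by rw [hβdef, hαdef]; linarith
  have hγval : γ = ((d:ℝ) - s)/2 := by rw [hγdef, hβdef, hαdef]; ring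
  have hγneg : γ < 0 := by rw [hγval]; linarith
  have hγbig : -(1/2) ≤ γ := by rw [hγval]; linarith
  set c1 : ℝ := 1 + 1/(-2*α-1) with hc1def
  set c2 : ℝ := 1 + 1/(-2*β-1) with hc2def
  have hc1pos : 0 < c1 := by
    have : (0:ℝ) < -2*α-1 := by rw [hαdef]; linarith
    rw [hc1def]; positivity
  have hc2pos : 0 < c2 := by
    have : (0:ℝ) < -2*β-1 := by rw [hβdef, hαdef]; linarith
    rw [hc2def]; positivity
  set K : ℝ := c1 * c2 with hKdef
  have hKpos : 0 < K := mul_pos hc1pos hc2pos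
  clear_value α β γ c1 c2 K
  refine ⟨16/3 * K, fun a L ha haL => ?_⟩
  have ha0 : (0:ℝ) < a := by linarith
  have hL1 : (1:ℝ) ≤ L := le_trans ha haL
  have hL0 : (0:ℝ) < L := by linarith
  -- inner two integrals
  have inner : ∀ x y : ℝ, 1 ≤ x → 1 ≤ y →
      (∫⁻ u in Set.Ioi (0 : ℝ), ∫⁻ v in Set.Ioi (0 : ℝ),
        ENNReal.ofReal ((x ^ 2 + u ^ 2 + y ^ 2 + v ^ 2) ^ α))
      ≤ ENNReal.ofReal (K * (x^2 + y^2)^γ) := by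
    intro x y hx hy
    have hx0 : (0:ℝ) < x := by linarith
    have hy0 : (0:ℝ) < y := by linarith
    have hxy : (0:ℝ) < x^2 + y^2 := by positivity
    calc (∫⁻ u in Set.Ioi (0 : ℝ), ∫⁻ v in Set.Ioi (0 : ℝ),
          ENNReal.ofReal ((x ^ 2 + u ^ 2 + y ^ 2 + v ^ 2) ^ α))
        ≤ ∫⁻ u in Set.Ioi (0 : ℝ), ENNReal.ofReal (c1 * ((x^2 + y^2 + u^2) ^ β)) := by
          refine lintegral_mono fun u => ?_
          have hA : (0:ℝ) < x^2 + u^2 + y^2 := by positivity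
          refine le_trans (key_polar_aux α (x^2 + u^2 + y^2) hα hA) (le_of_eq ?_)
          rw [show x^2 + u^2 + y^2 = x^2 + y^2 + u^2 by ring, hc1def, hβdef]
      _ = ENNReal.ofReal c1 * ∫⁻ u in Set.Ioi (0 : ℝ), ENNReal.ofReal ((x^2 + y^2 + u^2) ^ β) := by
          simp_rw [ENNReal.ofReal_mul hc1pos.le]
          rw [lintegral_const_mul' _ _ ENNReal.ofReal_ne_top]
      _ ≤ ENNReal.ofReal c1 * ENNReal.ofReal (c2 * (x^2 + y^2)^γ) := by
          rw [hc2def, hγdef]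
          exact mul_le_mul_right (key_polar_aux β (x^2 + y^2) hβ hxy) _
      _ = ENNReal.ofReal (K * (x^2 + y^2)^γ) := by
          rw [← ENNReal.ofReal_mul hc1pos.le, hKdef, mul_assoc]
  -- the one-dimensional real integral
  set T : ℝ := ∫ y in Set.Ioc a L, y ^ γ with hTdef
  have hγgt : (-1:ℝ) < γ := by rw [hγval]; linarith
  have hintOn : IntegrableOn (fun y : ℝ => y ^ γ) (Set.Ioc a L) :=
    (intervalIntegral.intervalIntegrable_rpow' hγgt).1
  have hTval : T = (L ^ (γ+1) - a ^ (γ+1)) / (γ+1) := by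
    rw [hTdef, ← intervalIntegral.integral_of_le haL, integral_rpow (Or.inl hγgt)]
  have hT0 : 0 ≤ T := by
    rw [hTdef]
    exact setIntegral_nonneg measurableSet_Ioc fun y hy =>
      Real.rpow_nonneg (by linarith [hy.1] : (0:ℝ) ≤ y) _
  have hγ1pos : (0:ℝ) < γ + 1 := by linarith
  have hTle : T ≤ 2 * L ^ (γ+1) := by
    rw [hTval]
    have h1 : L ^ (γ+1) - a ^ (γ+1) ≤ L ^ (γ+1) := by
      have := Real.rpow_nonneg ha0.le (γ+1); linarith
    have h2 : (1:ℝ)/2 ≤ γ + 1 := by linarith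
    have h3 : (0:ℝ) ≤ L ^ (γ+1) := Real.rpow_nonneg hL0.le _
    rw [div_le_iff₀ hγ1pos]
    nlinarith [mul_nonneg h3 (by linarith : (0:ℝ) ≤ 2*(γ+1) - 1)]
  have hIy : (∫⁻ y in Set.Ioc a L, ENNReal.ofReal (y ^ γ)) = ENNReal.ofReal T := by
    rw [hTdef]
    rw [ofReal_integral_eq_lintegral_ofReal hintOn ?_]
    filter_upwards [ae_restrict_mem measurableSet_Ioc] with y hy using
      Real.rpow_nonneg (by linarith [hy.1] : (0:ℝ) ≤ y) _
  -- bound the double outer integral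
  have step2 : ∀ x : ℝ, x ∈ Set.Ioc a L →
      (∫⁻ y in Set.Ioc a L, ∫⁻ u in Set.Ioi (0 : ℝ), ∫⁻ v in Set.Ioi (0 : ℝ),
        ENNReal.ofReal ((x ^ 2 + u ^ 2 + y ^ 2 + v ^ 2) ^ α))
      ≤ ENNReal.ofReal (K * x ^ γ) * ENNReal.ofReal T := by
    intro x hxmem
    have hx : 1 ≤ x := le_trans ha hxmem.1.le
    have hx0 : (0:ℝ) < x := by linarith
    have hmeas : Measurable fun y : ℝ => ENNReal.ofReal (K * x ^ γ * y ^ γ) := by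
      fun_prop
    calc (∫⁻ y in Set.Ioc a L, ∫⁻ u in Set.Ioi (0 : ℝ), ∫⁻ v in Set.Ioi (0 : ℝ),
          ENNReal.ofReal ((x ^ 2 + u ^ 2 + y ^ 2 + v ^ 2) ^ α))
        ≤ ∫⁻ y in Set.Ioc a L, ENNReal.ofReal (K * x ^ γ * y ^ γ) := by
          refine setLIntegral_mono hmeas fun y hy => ?_
          have hy1 : 1 ≤ y := le_trans ha hy.1.le
          have hy0 : (0:ℝ) < y := by linarith
          refine le_trans (inner x y hx hy1) (ENNReal.ofReal_le_ofReal ?_)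
          have h1 : (x^2+y^2)^γ ≤ (x*y)^γ :=
            Real.rpow_le_rpow_of_nonpos (by positivity) (by nlinarith [sq_nonneg (x-y)])
              hγneg.le
          have h2 : (x*y)^γ = x^γ * y^γ := Real.mul_rpow hx0.le hy0.le
          calc K * (x^2+y^2)^γ ≤ K * (x*y)^γ := by
                exact mul_le_mul_of_nonneg_left h1 hKpos.le
            _ = K * x^γ * y^γ := by rw [h2]; ring
      _ = ENNReal.ofReal (K * x ^ γ) * ENNReal.ofReal T := by
          simp_rw [ENNReal.ofReal_mul (by positivity : (0:ℝ) ≤ K * x ^ γ)]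
          rw [lintegral_const_mul' _ _ ENNReal.ofReal_ne_top, hIy]
  -- assemble
  have hmeas2 : Measurable fun x : ℝ => ENNReal.ofReal (K * x ^ γ) * ENNReal.ofReal T := by
    fun_prop
  have main : (∫⁻ x in Set.Ioc a L, ∫⁻ y in Set.Ioc a L,
        ∫⁻ u in Set.Ioi (0 : ℝ), ∫⁻ v in Set.Ioi (0 : ℝ),
          ENNReal.ofReal ((x ^ 2 + u ^ 2 + y ^ 2 + v ^ 2) ^ α))
      ≤ ENNReal.ofReal (K * T * T) := by
    calc (∫⁻ x in Set.Ioc a L, ∫⁻ y in Set.Ioc a L,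
          ∫⁻ u in Set.Ioi (0 : ℝ), ∫⁻ v in Set.Ioi (0 : ℝ),
            ENNReal.ofReal ((x ^ 2 + u ^ 2 + y ^ 2 + v ^ 2) ^ α))
        ≤ ∫⁻ x in Set.Ioc a L, ENNReal.ofReal (K * x ^ γ) * ENNReal.ofReal T :=
          setLIntegral_mono hmeas2 step2
      _ = (∫⁻ x in Set.Ioc a L, ENNReal.ofReal (K * x ^ γ)) * ENNReal.ofReal T :=
          lintegral_mul_const' _ _ ENNReal.ofReal_ne_top
      _ = ENNReal.ofReal K * ENNReal.ofReal T * ENNReal.ofReal T := by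
          congr 1
          simp_rw [ENNReal.ofReal_mul hKpos.le]
          rw [lintegral_const_mul' _ _ ENNReal.ofReal_ne_top, hIy]
      _ = ENNReal.ofReal (K * T * T) := by
          rw [← ENNReal.ofReal_mul hKpos.le, ← ENNReal.ofReal_mul (by positivity)]
  refine le_trans main (ENNReal.ofReal_le_ofReal ?_)
  -- final real computation
  set q : ℝ := γ + 1 + (γ + 1) with hqdef
  have hq1 : (1:ℝ) ≤ q := by rw [hqdef]; linarith
  have hq2 : q ≤ 2 := by rw [hqdef]; linarith
  have hRval : (∫ r in Set.Ioc (a / 2) (2 * L), r ^ ((d : ℝ) + 1 - s))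
      = ((2*L) ^ q - (a/2) ^ q) / q := by
    rw [← intervalIntegral.integral_of_le (by linarith : a/2 ≤ 2*L),
      integral_rpow (Or.inl (by push_cast; linarith : (-1:ℝ) < (d:ℝ) + 1 - s))]
    have : (d:ℝ) + 1 - s + 1 = q := by rw [hqdef, hγval]; ring
    rw [this]
  have h2q : (2:ℝ) ≤ 2 ^ q := by
    calc (2:ℝ) = 2 ^ (1:ℝ) := (Real.rpow_one 2).symm
      _ ≤ 2 ^ q := Real.rpow_le_rpow_of_exponent_le one_le_two hq1
  have hLq0 : (0:ℝ) ≤ L ^ q := Real.rpow_nonneg hL0.le _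
  have hlow : (3/2) * L ^ q ≤ (2*L) ^ q - (a/2) ^ q := by
    have e1 : (2*L) ^ q = 2 ^ q * L ^ q := Real.mul_rpow (by norm_num) hL0.le
    have e2 : (a/2) ^ q ≤ (L/2) ^ q :=
      Real.rpow_le_rpow (by positivity) (by linarith) (by linarith)
    have e3 : (L/2) ^ q = L ^ q / 2 ^ q := Real.div_rpow hL0.le (by norm_num : (0:ℝ) ≤ 2) q
    have e4 : L ^ q / 2 ^ q ≤ L ^ q / 2 := by
      gcongr

    nlinarith
  have hR34 : (3/4) * L ^ q ≤ ((2*L) ^ q - (a/2) ^ q) / q := by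
    rw [le_div_iff₀ (by linarith : (0:ℝ) < q)]
    nlinarith
  rw [hRval]
  have hLsplit : L ^ q = L ^ (γ+1) * L ^ (γ+1) := by
    rw [hqdef, Real.rpow_add hL0]
  have hTT : T * T ≤ 4 * L ^ q := by
    rw [hLsplit]
    have hLg0 : (0:ℝ) ≤ L ^ (γ+1) := Real.rpow_nonneg hL0.le _
    nlinarith
  nlinarith [mul_le_mul_of_nonneg_left hTT hKpos.le,
    mul_le_mul_of_nonneg_left hR34 (by positivity : (0:ℝ) ≤ 16/3 * K)]
end

section
/- Let d ≥ 1 and s > d+1. There exists a constant C = C(d,s) < ∞ such that for any finite connected set Λ ⊂ Z^d, Σ_{i∈Λ} Σ_{j∉Λ} |i−j|^{−s} ≤ C |∂Λ|, where |∂Λ| is the number of nearest-neighbor bonds with one endpoint in Λ and the other in Λ^c. -/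
open scoped BigOperators

/-- Euclidean distance between two points of the lattice `ℤ^d`. -/
noncomputable def eD (d : ℕ) (i j : Fin d → ℤ) : ℝ :=
  Real.sqrt (∑ k, ((i k : ℝ) - (j k : ℝ)) ^ 2)

/-- Nearest-neighbor adjacency on `ℤ^d`. -/
def Adj (d : ℕ) (i j : Fin d → ℤ) : Prop := (∑ k, |i k - j k|) = 1

/-- A finite set `Λ ⊂ ℤ^d` is connected if any two of its points are joined by a
nearest-neighbor path staying in `Λ`. -/
def ConnectedSet (d : ℕ) (Λ : Finset (Fin d → ℤ)) : Prop :=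
  ∀ i ∈ Λ, ∀ j ∈ Λ,
    Relation.ReflTransGen (fun u v => u ∈ Λ ∧ v ∈ Λ ∧ Adj d u v) i j

/-- `|∂Λ|`: the number of nearest-neighbor bonds with one endpoint in `Λ` and the
other in `Λ^c`. -/
noncomputable def bdryCard (d : ℕ) (Λ : Finset (Fin d → ℤ)) : ℕ :=
  ∑ i ∈ Λ, ((Finset.Icc (i - 1) (i + 1)).filter
      (fun j => j ∉ Λ ∧ (∑ k, |i k - j k|) = 1)).card

namespace BDom

variable {d : ℕ}

/-- The ℓ¹ norm of a lattice vector. -/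
def nrm (v : Fin d → ℤ) : ℕ := ∑ k, (v k).natAbs

/-- Partial sums of `|v k|` over coordinates `k < m`. -/
def pS (v : Fin d → ℤ) (m : ℕ) : ℕ :=
  ∑ k ∈ Finset.univ.filter (fun k : Fin d => (k : ℕ) < m), (v k).natAbs

/-- The canonical staircase path: position after `t` unit steps from `0` towards `v`. -/
def mv (v : Fin d → ℤ) (t : ℕ) : Fin d → ℤ :=
  fun k => (v k).sign * (min (v k).natAbs (t - pS v k) : ℕ)

lemma pS_zero (v : Fin d → ℤ) : pS v 0 = 0 := by simp [pS]

lemma pS_mono (v : Fin d → ℤ) : Monotone (pS v) := by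
  intro a b hab
  apply Finset.sum_le_sum_of_subset
  intro k hk
  simp only [Finset.mem_filter, Finset.mem_univ, true_and] at *
  omega

lemma pS_succ (v : Fin d → ℤ) (k : Fin d) :
    pS v ((k : ℕ) + 1) = pS v k + (v k).natAbs := by
  have h : Finset.univ.filter (fun j : Fin d => (j : ℕ) < (k : ℕ) + 1)
      = insert k (Finset.univ.filter (fun j : Fin d => (j : ℕ) < (k : ℕ))) := by
    ext j
    simp only [Finset.mem_filter, Finset.mem_univ, true_and, Finset.mem_insert, Fin.ext_iff]
    omega
  rw [pS, h, Finset.sum_insert (by simp)]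
  rw [pS]; ring

lemma pS_le (v : Fin d → ℤ) (m : ℕ) : pS v m ≤ nrm v :=
  Finset.sum_le_sum_of_subset (Finset.filter_subset _ _)

lemma pS_d (v : Fin d → ℤ) : pS v d = nrm v := by
  rw [pS, nrm]
  congr 1
  apply Finset.filter_true_of_mem
  intro j _
  exact j.isLt

lemma sum_min (v : Fin d → ℤ) (t : ℕ) :
    ∑ k : Fin d, min (v k).natAbs (t - pS v k) = min t (nrm v) := by
  have h1 : ∀ k : Fin d, min (v k).natAbs (t - pS v k)
      = min t (pS v ((k : ℕ) + 1)) - min t (pS v k) := by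
    intro k
    have h := pS_succ v k
    omega
  rw [Finset.sum_congr rfl (fun k _ => h1 k)]
  rw [Fin.sum_univ_eq_sum_range (fun m => min t (pS v (m + 1)) - min t (pS v m)) d]
  rw [Finset.sum_range_tsub (fun a b hab => min_le_min le_rfl (pS_mono v hab)) d]
  rw [pS_d, pS_zero]
  omega

lemma mv_zero (v : Fin d → ℤ) : mv v 0 = 0 := by
  funext k
  simp [mv]

lemma mv_of_le (v : Fin d → ℤ) {t : ℕ} (h : nrm v ≤ t) : mv v t = v := by
  funext k
  have h1 := pS_succ v k
  have h2 := pS_le v ((k : ℕ) + 1)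
  have h3 : min (v k).natAbs (t - pS v k) = (v k).natAbs := by omega
  simp [mv, h3, Int.sign_mul_abs]

lemma min_mono_t (v : Fin d → ℤ) (t : ℕ) (k : Fin d) :
    min (v k).natAbs (t - pS v k) ≤ min (v k).natAbs (t + 1 - pS v k) := by omega

lemma abs_mv_step (v : Fin d → ℤ) (t : ℕ) (k : Fin d) :
    |mv v (t + 1) k - mv v t k|
      = ((min (v k).natAbs (t + 1 - pS v k) - min (v k).natAbs (t - pS v k) : ℕ) : ℤ) := by
  have hmono := min_mono_t v t k
  rcases eq_or_ne (v k) 0 with h | h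
  · simp [mv, h]
  · have hs : |Int.sign (v k)| = 1 := by
      rcases h.lt_or_gt with h' | h'
      · rw [Int.sign_eq_neg_one_of_neg h']; rfl
      · rw [Int.sign_eq_one_of_pos h']; rfl
    simp only [mv]
    rw [← mul_sub, abs_mul, hs, one_mul, ← Nat.cast_sub hmono, Int.abs_natCast]

lemma sum_abs_mv_step (v : Fin d → ℤ) {t : ℕ} (ht : t < nrm v) :
    ∑ k, |mv v (t + 1) k - mv v t k| = 1 := by
  rw [Finset.sum_congr rfl (fun k _ => abs_mv_step v t k)]
  rw [Finset.sum_congr rfl (fun k _ => Nat.cast_sub (min_mono_t v t k))]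
  rw [Finset.sum_sub_distrib, ← Nat.cast_sum, ← Nat.cast_sum, sum_min, sum_min]
  have h1 : min (t + 1) (nrm v) = t + 1 := by omega
  have h2 : min t (nrm v) = t := by omega
  rw [h1, h2]
  push_cast
  ring

lemma abs_mv_step_le (v : Fin d → ℤ) {t : ℕ} (ht : t < nrm v) (k : Fin d) :
    |mv v (t + 1) k - mv v t k| ≤ 1 := by
  rw [← sum_abs_mv_step v ht]
  exact Finset.single_le_sum (f := fun j => |mv v (t + 1) j - mv v t j|)
    (fun j _ => abs_nonneg _) (Finset.mem_univ k)

lemma nrm_eq_zero {v : Fin d → ℤ} : nrm v = 0 ↔ v = 0 := by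
  simp [nrm, Finset.sum_eq_zero_iff, Int.natAbs_eq_zero, funext_iff]

lemma exists_cross {Λ : Finset (Fin d → ℤ)} {i v : Fin d → ℤ}
    (hi : i ∈ Λ) (hv : i + v ∉ Λ) :
    ∃ t, t < nrm v ∧ i + mv v t ∈ Λ ∧ i + mv v (t + 1) ∉ Λ := by
  classical
  have hex : ∃ t, i + mv v t ∉ Λ := ⟨nrm v, by rwa [mv_of_le v le_rfl]⟩
  set τ := Nat.find hex with hτdef
  have hτ : i + mv v τ ∉ Λ := Nat.find_spec hex
  have hτ0 : τ ≠ 0 := by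
    intro h
    apply hτ
    rw [h, mv_zero, add_zero]
    exact hi
  have hτle : τ ≤ nrm v := Nat.find_min' hex (by rwa [mv_of_le v le_rfl])
  refine ⟨τ - 1, by omega, ?_, ?_⟩
  · have h := Nat.find_min hex (show τ - 1 < τ by omega)
    simpa using h
  · rwa [show τ - 1 + 1 = τ by omega]

lemma card_cross_le (Λ : Finset (Fin d → ℤ)) (v : Fin d → ℤ) :
    (Λ.filter (fun i => i + v ∉ Λ)).card ≤ nrm v * bdryCard d Λ := by
  classical
  set B := Λ.sigma (fun u : Fin d → ℤ => (Finset.Icc (u - 1) (u + 1)).filter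
      (fun j => j ∉ Λ ∧ (∑ k, |u k - j k|) = 1)) with hB
  have hBcard : B.card = bdryCard d Λ := by
    rw [hB, Finset.card_sigma]; rfl
  have hcard : ((Finset.range (nrm v)) ×ˢ B).card = nrm v * bdryCard d Λ := by
    rw [Finset.card_product, Finset.card_range, hBcard]
  rw [← hcard]
  set φ : (Fin d → ℤ) → ℕ × ((_ : Fin d → ℤ) × (Fin d → ℤ)) := fun i =>
    if h : ∃ t, t < nrm v ∧ i + mv v t ∈ Λ ∧ i + mv v (t + 1) ∉ Λ then
      (h.choose, ⟨i + mv v h.choose, i + mv v (h.choose + 1)⟩)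
    else (0, ⟨0, 0⟩) with hφ
  apply Finset.card_le_card_of_injOn φ
  · intro i hi
    simp only [Finset.mem_coe, Finset.mem_filter] at hi
    obtain ⟨hiΛ, hiv⟩ := hi
    have hex : ∃ t, t < nrm v ∧ i + mv v t ∈ Λ ∧ i + mv v (t + 1) ∉ Λ :=
      exists_cross hiΛ hiv
    obtain ⟨ht, huΛ, hu'Λ⟩ := hex.choose_spec
    rw [hφ]
    simp only [dif_pos hex]
    rw [Finset.mem_coe, Finset.mem_product]
    constructor
    · simpa using ht
    · rw [hB, Finset.mem_sigma]
      refine ⟨huΛ, ?_⟩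
      rw [Finset.mem_filter]
      refine ⟨?_, hu'Λ, ?_⟩
      · rw [Finset.mem_Icc]
        constructor <;> intro k <;>
        · have h1 := abs_mv_step_le v ht k
          have h2 := abs_le.mp h1
          simp only [Pi.add_apply, Pi.sub_apply, Pi.one_apply]
          omega
      · have h := sum_abs_mv_step v ht
        rw [← h]
        apply Finset.sum_congr rfl
        intro k _
        rw [abs_sub_comm]
        congr 1
        simp only [Pi.add_apply]
        ring
  · intro i hi i' hi' heq
    simp only [Finset.coe_filter, Set.mem_setOf_eq] at hi hi'
    have hex : ∃ t, t < nrm v ∧ i + mv v t ∈ Λ ∧ i + mv v (t + 1) ∉ Λ :=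
      exists_cross hi.1 hi.2
    have hex' : ∃ t, t < nrm v ∧ i' + mv v t ∈ Λ ∧ i' + mv v (t + 1) ∉ Λ :=
      exists_cross hi'.1 hi'.2
    rw [hφ] at heq
    simp only [dif_pos hex, dif_pos hex', Prod.mk.injEq] at heq
    obtain ⟨ht, hσ⟩ := heq
    have hfst : i + mv v hex.choose = i' + mv v hex'.choose := congrArg Sigma.fst hσ
    rw [← ht] at hfst
    exact add_right_cancel hfst

/-! ### Analytic facts -/

lemma summable_int_aux {p : ℝ} (hp : 1 < p) :
    Summable (fun z : ℤ => (1 + |(z : ℝ)|) ^ (-p)) := by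
  have hind : Summable (fun z : ℤ => if z = 0 then (1 : ℝ) else 0) := by
    apply summable_of_ne_finset_zero (s := {(0 : ℤ)})
    intro z hz
    simp only [Finset.mem_singleton] at hz
    simp [hz]
  have h1 : Summable (fun z : ℤ => |(z : ℝ)| ^ (-p) + (if z = 0 then (1 : ℝ) else 0)) :=
    (Real.summable_abs_int_rpow hp).add hind
  apply Summable.of_nonneg_of_le (fun z => Real.rpow_nonneg (by positivity) _) (fun z => ?_) h1
  rcases eq_or_ne z 0 with h | h
  · simp [h, Real.zero_rpow (show -p ≠ 0 by linarith), Real.one_rpow]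
  · have hz1 : (1 : ℝ) ≤ |(z : ℝ)| := by
      have : (1 : ℤ) ≤ |z| := Int.one_le_abs (by exact_mod_cast h)
      calc (1 : ℝ) ≤ ((|z| : ℤ) : ℝ) := by exact_mod_cast this
      _ = |(z : ℝ)| := by push_cast; ring
    have hb := Real.rpow_le_rpow_of_nonpos (show (0:ℝ) < |(z : ℝ)| by linarith)
      (show |(z : ℝ)| ≤ 1 + |(z : ℝ)| by linarith) (show -p ≤ 0 by linarith)
    simp only [if_neg h]
    have h0 : (0 : ℝ) ≤ |(z : ℝ)| ^ (-p) := Real.rpow_nonneg (abs_nonneg _) _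
    linarith

lemma summable_pi_prod : ∀ (n : ℕ) (f : ℤ → ℝ), (∀ z, 0 ≤ f z) → Summable f →
    Summable (fun v : Fin n → ℤ => ∏ k, f (v k)) := by
  intro n
  induction n with
  | zero =>
    intro f h0 hf
    have huniq : Subsingleton (Fin 0 → ℤ) := ⟨fun a b => funext fun i => i.elim0⟩
    have : Finite (Fin 0 → ℤ) := @Finite.of_subsingleton _ huniq
    exact Summable.of_finite
  | succ n ih =>
    intro f h0 hf
    have ihn := ih f h0 hf
    have hf0 : (0 : ℤ → ℝ) ≤ f := h0
    have hg0 : (0 : (Fin n → ℤ) → ℝ) ≤ fun v : Fin n → ℤ => ∏ k, f (v k) :=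
      fun w => Finset.prod_nonneg fun k _ => h0 _
    have hprod := Summable.mul_of_nonneg hf ihn hf0 hg0
    have hcomp := hprod.comp_injective (Fin.consEquiv (fun _ => ℤ)).symm.injective
    apply hcomp.congr
    intro v
    simp only [Function.comp_apply]
    exact (Fin.prod_univ_succ (fun k => f (v k))).symm

lemma nrm_cast_le {v : Fin d → ℤ} (k : Fin d) : |((v k : ℤ) : ℝ)| ≤ (nrm v : ℝ) := by
  have h1 : (v k).natAbs ≤ nrm v :=
    Finset.single_le_sum (f := fun k => (v k).natAbs) (fun j _ => Nat.zero_le _)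
      (Finset.mem_univ k)
  calc |((v k : ℤ) : ℝ)| = ((v k).natAbs : ℝ) := by
        rw [Nat.cast_natAbs, Int.cast_abs]
  _ ≤ (nrm v : ℝ) := by exact_mod_cast h1

lemma key_rpow_ineq (hd : 1 ≤ d) {s : ℝ} (hs : (d : ℝ) + 1 < s) {v : Fin d → ℤ}
    (hv : v ≠ 0) :
    (nrm v : ℝ) ^ (1 - s) ≤ (2 : ℝ) ^ (s - 1) *
      ∏ k, (1 + |((v k : ℤ) : ℝ)|) ^ (-((s - 1) / d)) := by
  have hd0 : (0 : ℝ) < d := by exact_mod_cast hd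
  have hn1 : 1 ≤ nrm v := Nat.one_le_iff_ne_zero.mpr (fun h => hv (nrm_eq_zero.mp h))
  have hN1 : (1 : ℝ) ≤ (nrm v : ℝ) := by exact_mod_cast hn1
  set N : ℝ := (nrm v : ℝ) with hNdef
  set p : ℝ := (s - 1) / d with hpdef
  have hp0 : 0 < p := by
    apply div_pos _ hd0
    linarith
  -- bound the product from above
  have hprod_le : ∏ k, (1 + |((v k : ℤ) : ℝ)|) ≤ (2 * N) ^ d := by
    calc ∏ k, (1 + |((v k : ℤ) : ℝ)|) ≤ ∏ _k : Fin d, (2 * N) := by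
          apply Finset.prod_le_prod
          · intro k _; positivity
          · intro k _
            have := nrm_cast_le (v := v) k
            linarith
    _ = (2 * N) ^ d := by
          rw [Finset.prod_const, Finset.card_univ, Fintype.card_fin]
  have hprod_pos : (0 : ℝ) < ∏ k, (1 + |((v k : ℤ) : ℝ)|) := by
    apply Finset.prod_pos
    intro k _
    positivity
  -- write the product of rpows as an rpow of the product
  have hsplit : ∏ k, (1 + |((v k : ℤ) : ℝ)|) ^ (-p)
      = (∏ k, (1 + |((v k : ℤ) : ℝ)|)) ^ (-p) := by
    rw [← Real.finset_prod_rpow _ _ (fun k _ => by positivity) (-p)]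
  have hanti : ((2 * N) ^ d) ^ (-p) ≤ (∏ k, (1 + |((v k : ℤ) : ℝ)|)) ^ (-p) :=
    Real.rpow_le_rpow_of_nonpos hprod_pos hprod_le (by linarith)
  -- compute ((2N)^d)^(-p)
  have hcalc : ((2 * N) ^ d : ℝ) ^ (-p) = (2 : ℝ) ^ (1 - s) * N ^ (1 - s) := by
    have h2N : (0 : ℝ) ≤ 2 * N := by linarith
    rw [← Real.rpow_natCast (2 * N) d, ← Real.rpow_mul h2N]
    have : (d : ℝ) * (-p) = 1 - s := by
      rw [hpdef]
      field_simp
      ring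
    rw [this, Real.mul_rpow (by norm_num) (by linarith)]
  have h2pos : (0 : ℝ) < (2 : ℝ) ^ (s - 1) := Real.rpow_pos_of_pos (by norm_num) _
  have hfinal : N ^ (1 - s) = (2 : ℝ) ^ (s - 1) * ((2 : ℝ) ^ (1 - s) * N ^ (1 - s)) := by
    rw [← mul_assoc, ← Real.rpow_add (by norm_num : (0:ℝ) < 2)]
    norm_num
  rw [hfinal, hsplit]
  apply mul_le_mul_of_nonneg_left _ h2pos.le
  calc (2 : ℝ) ^ (1 - s) * N ^ (1 - s) = ((2 * N) ^ d : ℝ) ^ (-p) := hcalc.symm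
  _ ≤ _ := hanti

lemma summable_g' (hd : 1 ≤ d) {s : ℝ} (hs : (d : ℝ) + 1 < s) :
    Summable (fun v : Fin d → ℤ => if v = 0 then (0 : ℝ) else (nrm v : ℝ) ^ (1 - s)) := by
  have hd0 : (0 : ℝ) < d := by exact_mod_cast hd
  set p : ℝ := (s - 1) / d with hpdef
  have hp1 : 1 < p := by
    rw [hpdef, lt_div_iff₀ hd0]
    linarith
  have hF : Summable (fun v : Fin d → ℤ => ∏ k, (1 + |((v k : ℤ) : ℝ)|) ^ (-p)) := by
    have := summable_pi_prod d (fun z : ℤ => (1 + |(z : ℝ)|) ^ (-p))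
      (fun z => Real.rpow_nonneg (by positivity) _) (summable_int_aux hp1)
    exact this
  apply Summable.of_nonneg_of_le ?_ ?_ (hF.mul_left ((2 : ℝ) ^ (s - 1)))
  · intro v
    split
    · exact le_rfl
    · exact Real.rpow_nonneg (Nat.cast_nonneg _) _
  · intro v
    rcases eq_or_ne v 0 with h | h
    · rw [if_pos h]
      have : (0:ℝ) ≤ ∏ k, (1 + |((v k : ℤ) : ℝ)|) ^ (-p) :=
        Finset.prod_nonneg fun k _ => Real.rpow_nonneg (by positivity) _
      positivity
    · rw [if_neg h]
      exact key_rpow_ineq hd hs h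

lemma eD_self_add (i v : Fin d → ℤ) :
    eD d i (i + v) = Real.sqrt (∑ k, ((v k : ℝ)) ^ 2) := by
  unfold eD
  congr 1
  apply Finset.sum_congr rfl
  intro k _
  simp only [Pi.add_apply]
  push_cast
  ring

lemma eD_lower (hd : 1 ≤ d) (i : Fin d → ℤ) {v : Fin d → ℤ} (hv : v ≠ 0) :
    (nrm v : ℝ) / d ≤ eD d i (i + v) := by
  have hd0 : (0 : ℝ) < d := by exact_mod_cast hd
  have hne : (Finset.univ : Finset (Fin d)).Nonempty := by
    rw [Finset.univ_nonempty_iff]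
    exact Fin.pos_iff_nonempty.mp hd
  obtain ⟨k0, _, hk0⟩ := Finset.exists_max_image Finset.univ (fun k => (v k).natAbs) hne
  have h1 : nrm v ≤ d * (v k0).natAbs := by
    calc nrm v = ∑ k, (v k).natAbs := rfl
    _ ≤ ∑ _k : Fin d, (v k0).natAbs :=
        Finset.sum_le_sum (fun k _ => hk0 k (Finset.mem_univ k))
    _ = d * (v k0).natAbs := by
        rw [Finset.sum_const, Finset.card_univ, Fintype.card_fin, smul_eq_mul]
  rw [eD_self_add]
  have h2 : |((v k0 : ℤ) : ℝ)| ≤ Real.sqrt (∑ k, ((v k : ℝ)) ^ 2) := by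
    rw [← Real.sqrt_sq_eq_abs]
    apply Real.sqrt_le_sqrt
    exact Finset.single_le_sum (f := fun k => ((v k : ℤ) : ℝ) ^ 2)
      (fun k _ => sq_nonneg _) (Finset.mem_univ k0)
  refine le_trans ?_ h2
  rw [div_le_iff₀ hd0]
  have h3 : ((v k0).natAbs : ℝ) = |((v k0 : ℤ) : ℝ)| := by
    rw [Nat.cast_natAbs, Int.cast_abs]
  calc (nrm v : ℝ) ≤ (d : ℝ) * ((v k0).natAbs : ℝ) := by exact_mod_cast h1
  _ = |((v k0 : ℤ) : ℝ)| * d := by rw [h3]; ring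

lemma nrm_pos {v : Fin d → ℤ} (hv : v ≠ 0) : (1 : ℝ) ≤ (nrm v : ℝ) := by
  have : 1 ≤ nrm v := Nat.one_le_iff_ne_zero.mpr (fun h => hv (nrm_eq_zero.mp h))
  exact_mod_cast this

lemma eD_rpow_le (hd : 1 ≤ d) {s : ℝ} (hs : 0 < s) (i : Fin d → ℤ) {v : Fin d → ℤ}
    (hv : v ≠ 0) :
    eD d i (i + v) ^ (-s) ≤ (d : ℝ) ^ s * (nrm v : ℝ) ^ (-s) := by
  have hd0 : (0 : ℝ) < d := by exact_mod_cast hd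
  have hN1 := nrm_pos hv
  have h0 : (0 : ℝ) < (nrm v : ℝ) / d := by positivity
  have h1 := Real.rpow_le_rpow_of_nonpos h0 (eD_lower hd i hv) (neg_nonpos.mpr hs.le)
  refine h1.trans_eq ?_
  rw [Real.div_rpow (by linarith) hd0.le, Real.rpow_neg hd0.le, div_eq_mul_inv, inv_inv]
  ring

end BDom

open BDom in
/-- For `d ≥ 1` and `s > d+1` there is `C = C(d,s) < ∞` such that for every finite
connected `Λ ⊂ ℤ^d`: `Σ_{i∈Λ} Σ_{j∉Λ} |i-j|^{-s} ≤ C |∂Λ|`. -/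
theorem boundary_domination (d : ℕ) (hd : 1 ≤ d) (s : ℝ) (hs : (d : ℝ) + 1 < s) :
    ∃ C : ℝ, ∀ Λ : Finset (Fin d → ℤ), ConnectedSet d Λ →
      (∑ i ∈ Λ, ∑' j : Fin d → ℤ, if j ∈ Λ then 0 else eD d i j ^ (-s))
        ≤ C * bdryCard d Λ := by
  classical
  have hd0 : (0 : ℝ) < d := by exact_mod_cast hd
  have hs0 : 0 < s := by linarith
  set g' : (Fin d → ℤ) → ℝ := fun v => if v = 0 then 0 else (nrm v : ℝ) ^ (1 - s) with hg'def
  have hg'summ : Summable g' := summable_g' hd hs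
  have hg'nonneg : ∀ v, 0 ≤ g' v := by
    intro v
    simp only [hg'def]
    split
    · exact le_rfl
    · exact Real.rpow_nonneg (Nat.cast_nonneg _) _
  set g : (Fin d → ℤ) → ℝ := fun v =>
    if v = 0 then 0 else (d : ℝ) ^ s * (nrm v : ℝ) ^ (-s) with hgdef
  have hgnonneg : ∀ v, 0 ≤ g v := by
    intro v
    simp only [hgdef]
    split
    · exact le_rfl
    · positivity
  have hgle : ∀ v, g v ≤ (d : ℝ) ^ s * g' v := by
    intro v
    simp only [hgdef, hg'def]
    rcases eq_or_ne v 0 with h | h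
    · simp [h]
    · rw [if_neg h, if_neg h]
      apply mul_le_mul_of_nonneg_left _ (Real.rpow_nonneg hd0.le s)
      exact Real.rpow_le_rpow_of_exponent_le (nrm_pos h) (by linarith)
  have hgsumm : Summable g :=
    Summable.of_nonneg_of_le hgnonneg hgle (hg'summ.mul_left _)
  refine ⟨(d : ℝ) ^ s * ∑' v, g' v, fun Λ _hconn => ?_⟩
  set h : (Fin d → ℤ) → (Fin d → ℤ) → ℝ := fun i v =>
    if i + v ∈ Λ then 0 else eD d i (i + v) ^ (-s) with hhdef
  have hnonneg : ∀ i v, 0 ≤ h i v := by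
    intro i v
    simp only [hhdef]
    split
    · exact le_rfl
    · exact Real.rpow_nonneg (Real.sqrt_nonneg _) _
  have hbound : ∀ i ∈ Λ, ∀ v, h i v ≤ g v := by
    intro i hi v
    by_cases hm : i + v ∈ Λ
    · simp only [hhdef, if_pos hm]
      exact hgnonneg v
    · have hv : v ≠ 0 := by
        rintro rfl
        rw [add_zero] at hm
        exact hm hi
      simp only [hhdef, hgdef, if_neg hm, if_neg hv]
      exact eD_rpow_le hd hs0 i hv
  have hsummh : ∀ i ∈ Λ, Summable (h i) :=
    fun i hi => Summable.of_nonneg_of_le (hnonneg i) (hbound i hi) hgsumm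
  have hre : ∀ i : Fin d → ℤ,
      (∑' j : Fin d → ℤ, if j ∈ Λ then (0:ℝ) else eD d i j ^ (-s)) = ∑' v, h i v := by
    intro i
    rw [← Equiv.tsum_eq (Equiv.addLeft i)
      (fun j => if j ∈ Λ then (0:ℝ) else eD d i j ^ (-s))]
    apply tsum_congr
    intro v
    simp only [hhdef, Equiv.coe_addLeft]
    exact if_congr Iff.rfl rfl rfl
  have hpt : ∀ v, (∑ i ∈ Λ, h i v) ≤ (d : ℝ) ^ s * g' v * (bdryCard d Λ : ℝ) := by
    intro v
    rcases eq_or_ne v 0 with hv | hv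
    · have hL : (∑ i ∈ Λ, h i v) = 0 := by
        apply Finset.sum_eq_zero
        intro i hi
        simp only [hhdef, hv, add_zero, if_pos hi]
      rw [hL]
      simp [hg'def, hv]
    · have hN1 := nrm_pos hv
      have hrw : ∀ i ∈ Λ, h i v
          = if i + v ∉ Λ then eD d i (i + v) ^ (-s) else 0 := by
        intro i _
        simp only [hhdef]
        by_cases hm : i + v ∈ Λ <;> simp [hm]
      calc (∑ i ∈ Λ, h i v)
          = ∑ i ∈ Λ.filter (fun i => i + v ∉ Λ), eD d i (i + v) ^ (-s) := by
            rw [Finset.sum_congr rfl hrw, Finset.sum_filter]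
      _ ≤ (Λ.filter (fun i => i + v ∉ Λ)).card • ((d : ℝ) ^ s * (nrm v : ℝ) ^ (-s)) := by
            apply Finset.sum_le_card_nsmul
            intro i _
            exact eD_rpow_le hd hs0 i hv
      _ = ((Λ.filter (fun i => i + v ∉ Λ)).card : ℝ) * ((d : ℝ) ^ s * (nrm v : ℝ) ^ (-s)) := by
            rw [nsmul_eq_mul]
      _ ≤ ((nrm v * bdryCard d Λ : ℕ) : ℝ) * ((d : ℝ) ^ s * (nrm v : ℝ) ^ (-s)) := by
            apply mul_le_mul_of_nonneg_right _ (by positivity)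
            exact_mod_cast card_cross_le Λ v
      _ = (d : ℝ) ^ s * g' v * (bdryCard d Λ : ℝ) := by
            simp only [hg'def, if_neg hv]
            have hexp : (nrm v : ℝ) ^ (1 - s) = (nrm v : ℝ) * (nrm v : ℝ) ^ (-s) := by
              rw [show (1 : ℝ) - s = 1 + (-s) by ring,
                Real.rpow_add (by linarith : (0:ℝ) < (nrm v : ℝ)), Real.rpow_one]
            rw [hexp]
            push_cast
            ring
  have hsum1 : Summable (fun v => ∑ i ∈ Λ, h i v) := summable_sum hsummh
  have hsum2 : Summable (fun v => (d : ℝ) ^ s * g' v * (bdryCard d Λ : ℝ)) := by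
    exact (hg'summ.mul_left _).mul_right _
  calc (∑ i ∈ Λ, ∑' j : Fin d → ℤ, if j ∈ Λ then (0:ℝ) else eD d i j ^ (-s))
      = ∑ i ∈ Λ, ∑' v, h i v := Finset.sum_congr rfl (fun i _ => hre i)
  _ = ∑' v, ∑ i ∈ Λ, h i v := (Summable.tsum_finsetSum hsummh).symm
  _ ≤ ∑' v, (d : ℝ) ^ s * g' v * (bdryCard d Λ : ℝ) := Summable.tsum_le_tsum hpt hsum1 hsum2
  _ = ((d : ℝ) ^ s * ∑' v, g' v) * (bdryCard d Λ : ℝ) := by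
      rw [tsum_mul_right, tsum_mul_left]
end

section
/- Let s > d ≥ 1 and let ℓ, a satisfy a ≥ 2ℓ ≥ 2. Let V_1, V_2 ⊂ Z^d be two translates of the box Λ_ℓ = [−ℓ,ℓ]^d ∩ Z^d with dist(V_1,V_2) ≥ a. Then there is a constant C = C(d,s) independent of a, ℓ, the configuration, and the reference points, such that for any σ : Z^d → {−1,+1} and any i_0 ∈ V_1, j_0 ∈ V_2: | Σ_{i∈V_1} Σ_{j∈V_2} |i−j|^{−s} σ_i σ_j − |i_0−j_0|^{−s} (Σ_{i∈V_1} σ_i)(Σ_{j∈V_2} σ_j) | ≤ C (ℓ/a) |i_0−j_0|^{−s} |Λ_ℓ|^2. -/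
open scoped BigOperators

/-- The box `Λ_ℓ = [-ℓ,ℓ]^d ∩ ℤ^d`. -/
noncomputable def box (d L : ℕ) : Finset (Fin d → ℤ) :=
  Finset.Icc (fun _ => -(L : ℤ)) (fun _ => (L : ℤ))

/-- MVT bound for `x^{-s}`. -/
lemma rpow_neg_sub_le (s : ℝ) (hs : 0 < s) {x y : ℝ} (hx : 0 < x) (hxy : x ≤ y) :
    x ^ (-s) - y ^ (-s) ≤ s * x ^ (-(s+1)) * (y - x) := by
  rcases eq_or_lt_of_le hxy with rfl | hlt
  · simp
  have hcont : ContinuousOn (fun t : ℝ => t ^ (-s)) (Set.Icc x y) := by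
    apply ContinuousOn.rpow_const continuousOn_id
    intro t ht
    exact Or.inl (ne_of_gt (lt_of_lt_of_le hx ht.1))
  have hderiv : ∀ t ∈ Set.Ioo x y, HasDerivAt (fun t : ℝ => t ^ (-s)) ((-s) * t ^ (-s - 1)) t := by
    intro t ht
    exact Real.hasDerivAt_rpow_const (Or.inl (ne_of_gt (hx.trans ht.1)))
  obtain ⟨c, hc, hceq⟩ := exists_hasDerivAt_eq_slope _ _ hlt hcont hderiv
  have hc0 : 0 < c := hx.trans hc.1
  have hne : y - x ≠ 0 := by intro h; linarith
  rw [eq_div_iff hne] at hceq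
  have hkey : x ^ (-s) - y ^ (-s) = s * c ^ (-s-1) * (y - x) := by linarith [hceq]
  rw [hkey]
  have he : -(s+1) = -s-1 := by ring
  rw [he]
  have hcx : c ^ (-s-1) ≤ x ^ (-s-1) :=
    Real.rpow_le_rpow_of_nonpos hx (le_of_lt hc.1) (by linarith)
  have hyx : (0:ℝ) ≤ y - x := by linarith
  gcongr

lemma abs_rpow_neg_sub_le (s : ℝ) (hs : 0 < s) {m x y : ℝ} (hm : 0 < m)
    (hx : m ≤ x) (hy : m ≤ y) :
    |x ^ (-s) - y ^ (-s)| ≤ s * m ^ (-(s+1)) * |x - y| := by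
  have key : ∀ u v : ℝ, m ≤ u → m ≤ v → u ≤ v →
      |u ^ (-s) - v ^ (-s)| ≤ s * m ^ (-(s+1)) * |u - v| := by
    intro u v hu hv huv
    have h1 : v ^ (-s) ≤ u ^ (-s) :=
      Real.rpow_le_rpow_of_nonpos (hm.trans_le hu) huv (by linarith)
    rw [abs_of_nonneg (by linarith), abs_of_nonpos (by linarith)]
    calc u ^ (-s) - v ^ (-s) ≤ s * u ^ (-(s+1)) * (v - u) :=
          rpow_neg_sub_le s hs (hm.trans_le hu) huv
      _ ≤ s * m ^ (-(s+1)) * (v - u) := by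
          have h := Real.rpow_le_rpow_of_nonpos hm hu (by linarith : -(s+1) ≤ 0)
          have : (0:ℝ) ≤ v - u := by linarith
          gcongr
      _ = s * m ^ (-(s+1)) * -(u - v) := by ring
  rcases le_total x y with h | h
  · exact key x y hx hy h
  · have := key y x hy hx h
    rw [abs_sub_comm, abs_sub_comm x y]; exact this

/-- eD as a distance in Euclidean space. -/
noncomputable def emb (d : ℕ) (i : Fin d → ℤ) : EuclideanSpace ℝ (Fin d) :=
  WithLp.toLp 2 (fun k => (i k : ℝ))

lemma eD_eq_dist (d : ℕ) (i j : Fin d → ℤ) : eD d i j = dist (emb d i) (emb d j) := by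
  rw [EuclideanSpace.dist_eq, eD]
  congr 1
  apply Finset.sum_congr rfl
  intro k _
  rw [Real.dist_eq, sq_abs]
  rfl

lemma eD_triangle (d : ℕ) (p q p' q' : Fin d → ℤ) :
    |eD d p q - eD d p' q'| ≤ eD d p p' + eD d q q' := by
  simp only [eD_eq_dist]
  have := dist_dist_dist_le (emb d p) (emb d q) (emb d p') (emb d q')
  rwa [Real.dist_eq] at this

lemma eD_shift (d : ℕ) (c i j : Fin d → ℤ) : eD d (c + i) (c + j) = eD d i j := by
  unfold eD
  congr 1
  apply Finset.sum_congr rfl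
  intro k _
  push_cast [Pi.add_apply]
  ring_nf

lemma mem_box_iff {d L : ℕ} {i : Fin d → ℤ} :
    i ∈ box d L ↔ ∀ k, -(L:ℤ) ≤ i k ∧ i k ≤ (L:ℤ) := by
  simp [box, Finset.mem_Icc, Pi.le_def, forall_and]

lemma eD_box_le {d L : ℕ} {i j : Fin d → ℤ} (hi : i ∈ box d L) (hj : j ∈ box d L) :
    eD d i j ≤ 2 * L * Real.sqrt d := by
  rw [mem_box_iff] at hi hj
  have hbound : ∀ k, ((i k : ℝ) - (j k : ℝ))^2 ≤ (2*L)^2 := by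
    intro k
    have h1 : (-(L:ℝ)) ≤ (i k : ℝ) := by exact_mod_cast (hi k).1
    have h2 : ((i k : ℝ)) ≤ (L:ℝ) := by exact_mod_cast (hi k).2
    have h3 : (-(L:ℝ)) ≤ (j k : ℝ) := by exact_mod_cast (hj k).1
    have h4 : ((j k : ℝ)) ≤ (L:ℝ) := by exact_mod_cast (hj k).2
    have habs : |(i k : ℝ) - (j k : ℝ)| ≤ 2*L := by
      rw [abs_le]; constructor <;> linarith
    nlinarith [abs_nonneg ((i k:ℝ) - (j k:ℝ)), sq_abs ((i k:ℝ)-(j k:ℝ))]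
  have hsum : (∑ k, ((i k : ℝ) - (j k : ℝ))^2) ≤ d * (2*L)^2 := by
    calc (∑ k, ((i k : ℝ) - (j k : ℝ))^2) ≤ ∑ _k : Fin d, (2*(L:ℝ))^2 :=
          Finset.sum_le_sum (fun k _ => hbound k)
      _ = d * (2*L)^2 := by simp [Finset.sum_const]
  calc eD d i j ≤ Real.sqrt (d * (2*L)^2) := Real.sqrt_le_sqrt hsum
    _ = 2 * L * Real.sqrt d := by
        rw [Real.sqrt_mul (by positivity), Real.sqrt_sq (by positivity)]; ring

/-- Smoothing lemma: for `s > d ≥ 1`, `a ≥ 2ℓ ≥ 2`, and two translates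
`V_1 = c_1 + Λ_ℓ`, `V_2 = c_2 + Λ_ℓ` with `dist(V_1,V_2) ≥ a`, for any spin
configuration `σ : ℤ^d → {−1,+1}` and reference points `i_0 ∈ V_1`, `j_0 ∈ V_2`:
`| Σ_{i∈V_1} Σ_{j∈V_2} |i−j|^{−s} σ_i σ_j − |i_0−j_0|^{−s} (Σ_{V_1} σ)(Σ_{V_2} σ) |
  ≤ C (ℓ/a) |i_0−j_0|^{−s} |Λ_ℓ|²` with `C = C(d,s)`. -/
theorem block_smoothing (d : ℕ) (hd : 1 ≤ d) (s : ℝ) (hs : (d : ℝ) < s) :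
    ∃ C : ℝ, ∀ (ℓ : ℕ) (a : ℝ), 1 ≤ ℓ → 2 * (ℓ : ℝ) ≤ a →
      ∀ c₁ c₂ : Fin d → ℤ,
        (∀ i ∈ box d ℓ, ∀ j ∈ box d ℓ, a ≤ eD d (c₁ + i) (c₂ + j)) →
        ∀ σ : (Fin d → ℤ) → ℝ, (∀ i, σ i = 1 ∨ σ i = -1) →
          ∀ i₀ ∈ box d ℓ, ∀ j₀ ∈ box d ℓ,
            |(∑ i ∈ box d ℓ, ∑ j ∈ box d ℓ,
                eD d (c₁ + i) (c₂ + j) ^ (-s) * σ (c₁ + i) * σ (c₂ + j))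
              - eD d (c₁ + i₀) (c₂ + j₀) ^ (-s) *
                  (∑ i ∈ box d ℓ, σ (c₁ + i)) * (∑ j ∈ box d ℓ, σ (c₂ + j))|
            ≤ C * ((ℓ : ℝ) / a) * eD d (c₁ + i₀) (c₂ + j₀) ^ (-s) *
                ((box d ℓ).card : ℝ) ^ 2 := by
  have hd1 : (1:ℝ) ≤ Real.sqrt d := by
    rw [show (1:ℝ) = Real.sqrt 1 by simp]
    exact Real.sqrt_le_sqrt (by exact_mod_cast hd)
  have hs0 : 0 < s := lt_of_lt_of_le (by norm_num) (le_of_lt (lt_of_le_of_lt (by exact_mod_cast hd : (1:ℝ) ≤ d) hs))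
  set B : ℝ := 1 + 2 * Real.sqrt d with hBdef
  have hB1 : (1:ℝ) ≤ B := by simp only [hBdef]; linarith
  have hB0 : (0:ℝ) < B := by linarith
  refine ⟨4 * Real.sqrt d * s * B ^ (s+1), ?_⟩
  intro ℓ a hℓ ha c₁ c₂ hsep σ hσ i₀ hi₀ j₀ hj₀
  have hℓ1 : (1:ℝ) ≤ (ℓ:ℝ) := by exact_mod_cast hℓ
  have ha0 : (0:ℝ) < a := by linarith
  set D₀ := eD d (c₁ + i₀) (c₂ + j₀) with hD₀def
  have hD₀a : a ≤ D₀ := hsep i₀ hi₀ j₀ hj₀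
  have hD₀ : 0 < D₀ := lt_of_lt_of_le ha0 hD₀a
  -- pointwise bound
  have key : ∀ i ∈ box d ℓ, ∀ j ∈ box d ℓ,
      |eD d (c₁ + i) (c₂ + j) ^ (-s) - D₀ ^ (-s)|
        ≤ 4 * Real.sqrt d * s * B ^ (s+1) * ((ℓ:ℝ)/a) * D₀ ^ (-s) := by
    intro i hi j hj
    set D := eD d (c₁ + i) (c₂ + j) with hDdef
    have hDa : a ≤ D := hsep i hi j hj
    have hD : 0 < D := lt_of_lt_of_le ha0 hDa
    have hdiff : |D - D₀| ≤ 4 * Real.sqrt d * ℓ := by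
      have ht := eD_triangle d (c₁ + i) (c₂ + j) (c₁ + i₀) (c₂ + j₀)
      have h1 : eD d (c₁ + i) (c₁ + i₀) ≤ 2 * ℓ * Real.sqrt d := by
        rw [eD_shift]; exact eD_box_le hi hi₀
      have h2 : eD d (c₂ + j) (c₂ + j₀) ≤ 2 * ℓ * Real.sqrt d := by
        rw [eD_shift]; exact eD_box_le hj hj₀
      calc |D - D₀| ≤ eD d (c₁+i) (c₁+i₀) + eD d (c₂+j) (c₂+j₀) := ht
        _ ≤ 2 * ℓ * Real.sqrt d + 2 * ℓ * Real.sqrt d := by linarith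
        _ = 4 * Real.sqrt d * ℓ := by ring
    have hsd0 : (0:ℝ) ≤ Real.sqrt d := by linarith
    have hm : D₀ / B ≤ D := by
      rw [div_le_iff₀ hB0]
      have h1 : D₀ - D ≤ |D - D₀| := by
        rw [abs_sub_comm]; exact le_abs_self _
      have h2 : 4 * Real.sqrt d * ℓ ≤ 2 * Real.sqrt d * a := by nlinarith
      have h3 : 2 * Real.sqrt d * a ≤ 2 * Real.sqrt d * D := by nlinarith
      simp only [hBdef]; nlinarith
    have hmD₀ : D₀ / B ≤ D₀ := div_le_self hD₀.le hB1
    have hm0 : 0 < D₀ / B := div_pos hD₀ hB0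
    have habs := abs_rpow_neg_sub_le s hs0 hm0 hm hmD₀
    have hpow : (D₀ / B) ^ (-(s+1)) = B ^ (s+1) * D₀ ^ (-(s+1)) := by
      rw [Real.div_rpow hD₀.le hB0.le, Real.rpow_neg hB0.le, div_eq_mul_inv, inv_inv,
        mul_comm]
    have hsplit : D₀ ^ (-(s+1)) ≤ D₀ ^ (-s) / a := by
      have h1 : D₀ ^ (-(s+1)) = D₀ ^ (-s) * D₀ ^ (-1 : ℝ) := by
        rw [← Real.rpow_add hD₀]; ring_nf
      rw [h1, Real.rpow_neg_one, div_eq_mul_inv]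
      have h2 : D₀⁻¹ ≤ a⁻¹ := by
        apply inv_anti₀ ha0 hD₀a
      have h3 : (0:ℝ) ≤ D₀ ^ (-s) := Real.rpow_nonneg hD₀.le _
      exact mul_le_mul_of_nonneg_left h2 h3
    have hBp : (0:ℝ) ≤ B ^ (s+1) := Real.rpow_nonneg hB0.le _
    have hD₀p : (0:ℝ) ≤ D₀ ^ (-(s+1)) := Real.rpow_nonneg hD₀.le _
    calc |D ^ (-s) - D₀ ^ (-s)| ≤ s * (D₀/B) ^ (-(s+1)) * |D - D₀| := habs
      _ = s * B ^ (s+1) * (D₀ ^ (-(s+1)) * |D - D₀|) := by rw [hpow]; ring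
      _ ≤ s * B ^ (s+1) * ((D₀ ^ (-s) / a) * (4 * Real.sqrt d * ℓ)) := by
          have hnn : (0:ℝ) ≤ s * B ^ (s+1) := by positivity
          apply mul_le_mul_of_nonneg_left _ hnn
          apply mul_le_mul hsplit hdiff (abs_nonneg _) (by positivity)
      _ = 4 * Real.sqrt d * s * B ^ (s+1) * ((ℓ:ℝ)/a) * D₀ ^ (-s) := by
          field_simp
  -- rewrite the difference as a double sum
  have hrw : (∑ i ∈ box d ℓ, ∑ j ∈ box d ℓ,
        eD d (c₁ + i) (c₂ + j) ^ (-s) * σ (c₁ + i) * σ (c₂ + j))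
      - D₀ ^ (-s) * (∑ i ∈ box d ℓ, σ (c₁ + i)) * (∑ j ∈ box d ℓ, σ (c₂ + j))
      = ∑ i ∈ box d ℓ, ∑ j ∈ box d ℓ,
          (eD d (c₁ + i) (c₂ + j) ^ (-s) - D₀ ^ (-s)) * σ (c₁ + i) * σ (c₂ + j) := by
    have hprod : D₀ ^ (-s) * (∑ i ∈ box d ℓ, σ (c₁ + i)) * (∑ j ∈ box d ℓ, σ (c₂ + j))
        = ∑ i ∈ box d ℓ, ∑ j ∈ box d ℓ, D₀ ^ (-s) * σ (c₁ + i) * σ (c₂ + j) := by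
      rw [mul_assoc, Finset.sum_mul_sum, Finset.mul_sum]
      refine Finset.sum_congr rfl fun i _ => ?_
      rw [Finset.mul_sum]
      exact Finset.sum_congr rfl fun j _ => by ring
    rw [hprod, ← Finset.sum_sub_distrib]
    refine Finset.sum_congr rfl fun i _ => ?_
    rw [← Finset.sum_sub_distrib]
    exact Finset.sum_congr rfl fun j _ => by ring
  rw [hrw]
  have hcard : (0:ℝ) ≤ ((box d ℓ).card : ℝ) := Nat.cast_nonneg _
  have hbnd : (0:ℝ) ≤ 4 * Real.sqrt d * s * B ^ (s+1) * ((ℓ:ℝ)/a) * D₀ ^ (-s) := by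
    have : (0:ℝ) ≤ B ^ (s+1) := Real.rpow_nonneg hB0.le _
    have : (0:ℝ) ≤ D₀ ^ (-s) := Real.rpow_nonneg hD₀.le _
    positivity
  calc |∑ i ∈ box d ℓ, ∑ j ∈ box d ℓ,
        (eD d (c₁ + i) (c₂ + j) ^ (-s) - D₀ ^ (-s)) * σ (c₁ + i) * σ (c₂ + j)|
      ≤ ∑ i ∈ box d ℓ, ∑ j ∈ box d ℓ,
        |(eD d (c₁ + i) (c₂ + j) ^ (-s) - D₀ ^ (-s)) * σ (c₁ + i) * σ (c₂ + j)| := by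
        refine (Finset.abs_sum_le_sum_abs _ _).trans ?_
        exact Finset.sum_le_sum fun i _ => Finset.abs_sum_le_sum_abs _ _
    _ ≤ ∑ _i ∈ box d ℓ, ∑ _j ∈ box d ℓ,
        4 * Real.sqrt d * s * B ^ (s+1) * ((ℓ:ℝ)/a) * D₀ ^ (-s) := by
        refine Finset.sum_le_sum fun i hi => Finset.sum_le_sum fun j hj => ?_
        have hσ1 : |σ (c₁ + i)| = 1 := by rcases hσ (c₁ + i) with h | h <;> simp [h]
        have hσ2 : |σ (c₂ + j)| = 1 := by rcases hσ (c₂ + j) with h | h <;> simp [h]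
        rw [abs_mul, abs_mul, hσ1, hσ2, mul_one, mul_one]
        exact key i hi j hj
    _ = 4 * Real.sqrt d * s * B ^ (s+1) * ((ℓ:ℝ)/a) * D₀ ^ (-s) * ((box d ℓ).card : ℝ) ^ 2 := by
        rw [Finset.sum_const, Finset.sum_const, nsmul_eq_mul, nsmul_eq_mul]
        ring
end
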